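/- If a persistence module M is q-tame and d_I(M,N) = 0, then N is q-tame. -/

import Mathlib

open scoped ENNReal

/-- A persistence module: a functor `(ℝ, ≤) → Vect_k`. -/
structure PersMod (k : Type) [Field k] where
  V : ℝ → Type
  [addCommGroup : ∀ t, AddCommGroup (V t)]
  [module : ∀ t, Module k (V t)]
  map : ∀ {s t : ℝ}, s ≤ t → (V s →ₗ[k] V t)
  map_refl : ∀ t : ℝ, map (le_refl t) = LinearMap.id
  map_trans : ∀ {s t u : ℝ} (hst : s ≤ t) (htu : t ≤ u),
    map (hst.trans htu) = (map htu).comp (map hst)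

attribute [instance] PersMod.addCommGroup PersMod.module

variable {k : Type} [Field k]

/-- A morphism of persistence modules: a natural transformation. -/
structure PersHom (M N : PersMod k) where
  app : ∀ t : ℝ, M.V t →ₗ[k] N.V t
  nat : ∀ {s t : ℝ} (h : s ≤ t), (app t).comp (M.map h) = (N.map h).comp (app s)

/-- A persistence module is ephemeral if all structure maps `M_{s,t}` with `s < t` vanish. -/
def Ephemeral (M : PersMod k) : Prop := ∀ {s t : ℝ} (h : s < t), M.map h.le = 0

/-- The pointwise kernel of a morphism of persistence modules. -/
noncomputable def kerMod {M N : PersMod k} (φ : PersHom M N) : PersMod k where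
  V t := LinearMap.ker (φ.app t)
  map {s t} h := (M.map h).restrict (p := LinearMap.ker (φ.app s))
    (q := LinearMap.ker (φ.app t)) (fun x hx => by
      have := congrArg (fun (f : M.V s →ₗ[k] N.V t) => f x) (φ.nat h)
      simp only [LinearMap.comp_apply] at this
      simp only [LinearMap.mem_ker] at hx ⊢
      rw [this, hx, map_zero])
  map_refl t := by
    ext x
    simp [LinearMap.restrict_apply, PersMod.map_refl]
  map_trans {s t u} hst htu := by
    ext x
    simp [LinearMap.restrict_apply, M.map_trans hst htu]

/-- The pointwise cokernel of a morphism of persistence modules. -/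
noncomputable def cokerMod {M N : PersMod k} (φ : PersHom M N) : PersMod k where
  V t := N.V t ⧸ LinearMap.range (φ.app t)
  map {s t} h := Submodule.mapQ _ _ (N.map h) (by
    rintro y ⟨x, rfl⟩
    have := congrArg (fun (f : M.V s →ₗ[k] N.V t) => f x) (φ.nat h)
    simp only [LinearMap.comp_apply] at this
    exact ⟨M.map h x, this⟩)
  map_refl t := by
    ext y
    simp [PersMod.map_refl]
  map_trans {s t u} hst htu := by
    ext y
    simp [N.map_trans hst htu]

/-- A weak isomorphism: a morphism whose (pointwise) kernel and cokernel persistence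
modules are ephemeral. -/
def WeakIso {M N : PersMod k} (φ : PersHom M N) : Prop :=
  Ephemeral (kerMod φ) ∧ Ephemeral (cokerMod φ)

/-- A `δ`-interleaving between two persistence modules. -/
def Interleaved (M N : PersMod k) (δ : ℝ) : Prop :=
  0 ≤ δ ∧ ∃ (F : ∀ t : ℝ, M.V t →ₗ[k] N.V (t + δ)) (G : ∀ t : ℝ, N.V t →ₗ[k] M.V (t + δ)),
    (∀ s t : ℝ, ∀ h : s ≤ t,
      (F t).comp (M.map h) = (N.map (add_le_add_left h δ)).comp (F s)) ∧
    (∀ s t : ℝ, ∀ h : s ≤ t,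
      (G t).comp (N.map h) = (M.map (add_le_add_left h δ)).comp (G s)) ∧
    (∀ t : ℝ, ∀ h : t ≤ t + δ + δ, (G (t + δ)).comp (F t) = M.map h) ∧
    (∀ t : ℝ, ∀ h : t ≤ t + δ + δ, (F (t + δ)).comp (G t) = N.map h)

/-- The interleaving distance between two persistence modules. -/
noncomputable def interleavingDist (M N : PersMod k) : ℝ≥0∞ :=
  sInf {e : ℝ≥0∞ | ∃ δ : ℝ, e = ENNReal.ofReal δ ∧ Interleaved M N δ}

/-- A persistence module is q-tame if all structure maps `M_{s,t}` with `s < t`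
have finite rank. -/
def QTame (M : PersMod k) : Prop :=
  ∀ {s t : ℝ} (h : s < t), Module.Finite k (LinearMap.range (M.map h.le))

/-- If a persistence module `M` is q-tame and `d_I(M,N) = 0`,
then `N` is q-tame. -/
theorem qTame_of_interleavingDist_eq_zero {M N : PersMod k} (hM : QTame M)
    (h : interleavingDist M N = 0) : QTame N := by
  intro s t hst
  have hc : (0:ℝ) < (t - s)/2 := by linarith
  have hlt : interleavingDist M N < ENNReal.ofReal ((t-s)/2) := by
    rw [h]; exact ENNReal.ofReal_pos.mpr hc
  rw [interleavingDist, sInf_lt_iff] at hlt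
  obtain ⟨e, ⟨δ, rfl, hδ0, F, G, natF, natG, GF, FG⟩, he⟩ := hlt
  have hδ : δ < (t - s)/2 := by
    rwa [ENNReal.ofReal_lt_ofReal_iff hc] at he
  have h2 : s + δ ≤ t - δ := by linarith
  have h2' : s + δ < t - δ := by linarith
  have h3 : t - δ + δ ≤ t := by linarith
  set C : M.V (t - δ) →ₗ[k] N.V t := (N.map h3).comp (F (t - δ)) with hCdef
  set B : N.V s →ₗ[k] M.V (t - δ) := (M.map h2).comp (G s) with hBdef
  have key : N.map hst.le = C.comp B := by
    rw [hCdef, hBdef]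
    have hb : s ≤ s + δ + δ := by linarith
    have e1 : (F (t - δ)).comp (M.map h2)
        = (N.map (add_le_add_left h2 δ)).comp (F (s + δ)) := natF (s + δ) (t - δ) h2
    have e3 : (F (s + δ)).comp (G s) = N.map hb := FG s hb
    calc N.map hst.le
        = (N.map h3).comp ((N.map (add_le_add_left h2 δ)).comp (N.map hb)) := by
          rw [← N.map_trans hb (add_le_add_left h2 δ),
            ← N.map_trans (hb.trans (add_le_add_left h2 δ)) h3]
      _ = (N.map h3).comp ((N.map (add_le_add_left h2 δ)).comp
            ((F (s + δ)).comp (G s))) := by rw [e3]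
      _ = (N.map h3).comp (((N.map (add_le_add_left h2 δ)).comp (F (s + δ))).comp (G s)) := by
          rw [LinearMap.comp_assoc]
      _ = (N.map h3).comp (((F (t - δ)).comp (M.map h2)).comp (G s)) := by rw [← e1]
      _ = (N.map h3).comp ((F (t - δ)).comp ((M.map h2).comp (G s))) := by
          rw [LinearMap.comp_assoc]
  have hrange : LinearMap.range (N.map hst.le) = (LinearMap.range B).map C := by
    rw [key, LinearMap.range_comp]
  have hfin : Module.Finite k (LinearMap.range (M.map h2)) := hM h2'
  have hle : LinearMap.range B ≤ LinearMap.range (M.map h2) := by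
    rw [hBdef]; exact LinearMap.range_comp_le_range _ _
  have hfinB : Module.Finite k (LinearMap.range B) :=
    Submodule.finiteDimensional_of_le hle
  rw [hrange]
  exact Module.Finite.map _ C
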